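/- arXiv:2111.01725 — 2 statements merged into one kernel-verified Lean document; each statement's English description precedes it below -/
import Mathlib

section
/- For all a, b > 0 there exist c > 0 and n₀ ∈ ℕ, depending only on a and b, such that the following holds for every n ≥ n₀: if D ⊆ K is measurable, B₀, B₁, B₂ ⊆ D are pairwise disjoint measurable sets with A(B_i) ≥ a·A(K)/n for i = 0,1,2 and A(D) ≤ b·A(K)/n, and x₁, …, x_n are i.i.d. points uniformly distributed in K, then the probability that B₀ contains exactly two of the points x₁, …, x_n, each of B₁ and B₂ contains exactly one of them, and D ∖ (B₀ ∪ B₁ ∪ B₂) contains none of them is at least c. -/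
open MeasureTheory ProbabilityTheory

noncomputable section

/-- The Euclidean plane. -/
abbrev E2 : Type := EuclideanSpace ℝ (Fin 2)

/-- The uniform (normalized Lebesgue) measure on a set `S`. -/
def unif (S : Set E2) : Measure E2 := (volume S)⁻¹ • volume.restrict S

/-! Choose the indices of the four points in `B 0, B 0, B 1, B 2` as an increasing `4`-tuple and
require every other point to miss `D`. Distinct tuples give disjoint events (some index is sent into
`D` by one and kept out of `D` by the other), each of probability at least
`(a/n)⁴ (1 - b/n)^(n-4)` by independence, and all of them lie in the target event. Hence the
probability is at least `C(n,4) (a/n)⁴ (1 - b/n)^(n-4) ≥ (a/2)⁴ e^(-2b) / 4!` for `n ≥ max 6 (2b)`. -/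

open Function

theorem Fintype.card_orderEmbedding_fin (k n : ℕ) : Fintype.card (Fin k ↪o Fin n) = n.choose k := by
  rw [Fintype.card_eq_nat_card, Nat.card_congr Set.powersetCard.ofFinEmbEquiv,
    Set.powersetCard.card, Nat.card_eq_fintype_card, Fintype.card_fin]

section Placement

variable {Ω α : Type*} {n k : ℕ}

def placementCell (D : Set α) (C : Fin k → Set α) (f : Fin k ↪ Fin n) : Fin n → Set α :=
  extend f C fun _ ↦ Dᶜ

def placementEvent (X : Fin n → Ω → α) (D : Set α) (C : Fin k → Set α) (f : Fin k ↪ Fin n) :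
    Set Ω :=
  ⋂ i, X i ⁻¹' placementCell D C f i

variable {X : Fin n → Ω → α} {D : Set α} {C : Fin k → Set α} {f : Fin k ↪ Fin n} {ω : Ω}

theorem placementCell_apply (j : Fin k) : placementCell D C f (f j) = C j :=
  f.injective.extend_apply _ _ j

theorem placementCell_of_notMem_range {i : Fin n} (hi : i ∉ Set.range f) :
    placementCell D C f i = Dᶜ :=
  extend_apply' _ _ _ hi

theorem mem_placementEvent :
    ω ∈ placementEvent X D C f ↔
      (∀ j, X (f j) ω ∈ C j) ∧ ∀ i ∉ Set.range f, X i ω ∉ D := by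
  simp only [placementEvent, Set.mem_iInter, Set.mem_preimage]
  refine ⟨fun h ↦ ⟨fun j ↦ ?_, fun i hi ↦ ?_⟩, fun ⟨hC, hD⟩ i ↦ ?_⟩
  · simpa [placementCell_apply] using h (f j)
  · simpa [placementCell_of_notMem_range hi] using h i
  · by_cases hi : i ∈ Set.range f
    · obtain ⟨j, rfl⟩ := hi
      simpa [placementCell_apply] using hC j
    · simpa [placementCell_of_notMem_range hi] using hD i hi

theorem pairwise_disjoint_placementEvent (hCD : ∀ j, C j ⊆ D) :
    Pairwise (Disjoint on fun g : Fin k ↪o Fin n ↦ placementEvent X D C g.toEmbedding) := by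
  intro g g' hne
  obtain ⟨i, hig, hig'⟩ := (Set.powersetCard.exists_mem_notMem_iff_ne _ _).mp
    (Set.powersetCard.ofFinEmbEquiv.injective.ne hne)
  rw [Set.powersetCard.mem_ofFinEmbEquiv_iff_mem_range] at hig hig'
  obtain ⟨j, rfl⟩ := hig
  refine Set.disjoint_left.mpr fun ω hω hω' ↦ ?_
  exact (mem_placementEvent.mp hω').2 _ hig' (hCD j ((mem_placementEvent.mp hω).1 j))

section Labelled

variable {ι : Type*} {B : ι → Set α} {ℓ : Fin k → ι}

theorem setOf_mem_eq_image_of_mem_placementEvent (hB : Pairwise (Disjoint on B))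
    (hBD : ∀ l, B l ⊆ D) (hω : ω ∈ placementEvent X D (B ∘ ℓ) f) (l : ι) :
    {i | X i ω ∈ B l} = f '' {j | ℓ j = l} := by
  ext i
  constructor
  · intro hi
    by_cases hrange : i ∈ Set.range f
    · obtain ⟨j, rfl⟩ := hrange
      refine ⟨j, ?_, rfl⟩
      by_contra hne
      exact Set.disjoint_left.mp (hB hne) ((mem_placementEvent.mp hω).1 j) hi
    · exact absurd (hBD l hi) ((mem_placementEvent.mp hω).2 i hrange)
  · rintro ⟨j, rfl, rfl⟩
    exact (mem_placementEvent.mp hω).1 j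

theorem ncard_setOf_mem_of_mem_placementEvent [DecidableEq ι] (hB : Pairwise (Disjoint on B))
    (hBD : ∀ l, B l ⊆ D) (hω : ω ∈ placementEvent X D (B ∘ ℓ) f) (l : ι) :
    {i | X i ω ∈ B l}.ncard = (Finset.univ.filter (ℓ · = l)).card := by
  rw [setOf_mem_eq_image_of_mem_placementEvent hB hBD hω,
    Set.ncard_image_of_injective _ f.injective, ← Set.ncard_coe_finset]
  simp

theorem exists_mem_of_mem_placementEvent (hω : ω ∈ placementEvent X D (B ∘ ℓ) f) {i : Fin n}
    (hi : X i ω ∈ D) : ∃ l, X i ω ∈ B l := by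
  by_cases hrange : i ∈ Set.range f
  · obtain ⟨j, rfl⟩ := hrange
    exact ⟨ℓ j, (mem_placementEvent.mp hω).1 j⟩
  · exact absurd hi ((mem_placementEvent.mp hω).2 i hrange)

end Labelled

variable [MeasurableSpace Ω] [MeasurableSpace α]

theorem measurableSet_placementCell (hD : MeasurableSet D) (hC : ∀ j, MeasurableSet (C j))
    (i : Fin n) : MeasurableSet (placementCell D C f i) := by
  by_cases hi : i ∈ Set.range f
  · obtain ⟨j, rfl⟩ := hi
    simpa [placementCell_apply] using hC j
  · simpa [placementCell_of_notMem_range hi] using hD.compl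

theorem measure_placementEvent {P : Measure Ω} {μ : Measure α} (hX : ∀ i, Measurable (X i))
    (hindep : iIndepFun X P) (hlaw : ∀ i, P.map (X i) = μ) (hD : MeasurableSet D)
    (hC : ∀ j, MeasurableSet (C j)) (f : Fin k ↪ Fin n) :
    P (placementEvent X D C f) = (∏ j, μ (C j)) * μ Dᶜ ^ (n - k) := by
  have hlaw' : ∀ i, P (X i ⁻¹' placementCell D C f i) = μ (placementCell D C f i) := fun i ↦ by
    rw [← hlaw, Measure.map_apply (hX i) (measurableSet_placementCell hD hC i)]
  have hprod := hindep.measure_inter_preimage_eq_mul Finset.univ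
    fun i _ ↦ measurableSet_placementCell (f := f) hD hC i
  simp only [Finset.mem_univ, Set.iInter_true, hlaw'] at hprod
  rw [placementEvent, hprod, ← Finset.prod_mul_prod_compl (Finset.univ.map f), Finset.prod_map]
  have hcard : (Finset.univ.map f)ᶜ.card = n - k := by simp [Finset.card_compl]
  congr 1
  · exact Finset.prod_congr rfl fun j _ ↦ by rw [placementCell_apply]
  · rw [← hcard, ← Finset.prod_const]
    refine Finset.prod_congr rfl fun i hi ↦ ?_
    rw [placementCell_of_notMem_range (by simpa using hi)]

theorem measure_iUnion_placementEvent {P : Measure Ω} {μ : Measure α}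
    (hX : ∀ i, Measurable (X i)) (hindep : iIndepFun X P) (hlaw : ∀ i, P.map (X i) = μ)
    (hD : MeasurableSet D) (hC : ∀ j, MeasurableSet (C j)) (hCD : ∀ j, C j ⊆ D) :
    P (⋃ g : Fin k ↪o Fin n, placementEvent X D C g.toEmbedding) =
      n.choose k * ((∏ j, μ (C j)) * μ Dᶜ ^ (n - k)) := by
  have hmeas (g : Fin k ↪ Fin n) : MeasurableSet (placementEvent X D C g) :=
    .iInter fun i ↦ hX i (measurableSet_placementCell hD hC i)
  rw [measure_iUnion (pairwise_disjoint_placementEvent hCD) fun g ↦ hmeas _, tsum_fintype]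
  simp only [measure_placementEvent hX hindep hlaw hD hC, Finset.sum_const, Finset.card_univ,
    Fintype.card_orderEmbedding_fin, nsmul_eq_mul]

end Placement

theorem Nat.half_pow_div_factorial_le_choose {k n : ℕ} (h : 2 * k ≤ n + 2) :
    (n / 2 : ℝ) ^ k / k.factorial ≤ n.choose k := by
  refine le_trans ?_ (Nat.pow_le_choose (α := ℝ) k n)
  gcongr
  rw [Nat.cast_sub (by omega)]
  have : (2 * k : ℝ) ≤ n + 2 := by exact_mod_cast h
  push_cast
  linarith

theorem Real.exp_neg_two_mul_le_one_sub {x : ℝ} (hx0 : 0 ≤ x) (hx : x ≤ 1 / 2) :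
    exp (-(2 * x)) ≤ 1 - x := by
  rw [exp_neg, inv_le_iff_one_le_mul₀ (exp_pos _)]
  calc (1 : ℝ) ≤ (1 - x) * (1 + 2 * x) := by nlinarith
    _ ≤ (1 - x) * exp (2 * x) := by
      gcongr
      · linarith
      · linarith [add_one_le_exp (2 * x)]

theorem Real.exp_neg_two_mul_le_one_sub_div_pow {b : ℝ} {n m : ℕ} (hb : 0 ≤ b) (hn : 0 < n)
    (hbn : 2 * b ≤ n) (hm : m ≤ n) : exp (-(2 * b)) ≤ (1 - b / n) ^ m := by
  replace hn : (0 : ℝ) < n := by exact_mod_cast hn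
  have hx : b / n ≤ 1 / 2 := by rw [div_le_iff₀ hn]; linarith
  calc exp (-(2 * b)) = exp (-(2 * (b / n))) ^ n := by
        rw [← exp_nat_mul]; congr 1; field_simp
    _ ≤ (1 - b / n) ^ n := by
        gcongr
        exact exp_neg_two_mul_le_one_sub (by positivity) hx
    _ ≤ (1 - b / n) ^ m := pow_le_pow_of_le_one (by linarith) (by linarith [div_nonneg hb hn.le]) hm

theorem choose_mul_pow_mul_one_sub_pow_ge {a b : ℝ} {k n : ℕ} (ha : 0 ≤ a) (hb : 0 ≤ b)
    (hn : 0 < n) (hk : 2 * k ≤ n + 2) (hbn : 2 * b ≤ n) :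
    (a / 2) ^ k * Real.exp (-(2 * b)) / k.factorial ≤
      n.choose k * ((a / n) ^ k * (1 - b / n) ^ (n - k)) := by
  have hn' : (n : ℝ) ≠ 0 := by positivity
  calc (a / 2) ^ k * Real.exp (-(2 * b)) / k.factorial
      = (n / 2 : ℝ) ^ k / k.factorial * ((a / n) ^ k * Real.exp (-(2 * b))) := by
        rw [div_mul_eq_mul_div, ← mul_assoc, ← mul_pow]
        field_simp
    _ ≤ n.choose k * ((a / n) ^ k * (1 - b / n) ^ (n - k)) := by
        gcongr
        · exact Nat.half_pow_div_factorial_le_choose hk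
        · exact Real.exp_neg_two_mul_le_one_sub_div_pow hb hn hbn (Nat.sub_le n k)

section Unif

variable {S t : Set E2}

theorem unif_apply (ht : MeasurableSet t) : unif S t = (volume S)⁻¹ * volume (t ∩ S) := by
  rw [unif, Measure.smul_apply, Measure.restrict_apply ht, smul_eq_mul]

theorem unif_apply_of_subset (ht : MeasurableSet t) (htS : t ⊆ S) :
    unif S t = volume t / volume S := by
  rw [unif_apply ht, Set.inter_eq_left.mpr htS, ENNReal.div_eq_inv_mul]

theorem volume_ne_zero_of_isProbabilityMeasure_unif [IsProbabilityMeasure (unif S)] :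
    volume S ≠ 0 := by
  intro h
  simpa [unif_apply MeasurableSet.univ, h] using measure_univ (μ := unif S)

theorem volume_ne_top_of_isProbabilityMeasure_unif [IsProbabilityMeasure (unif S)] :
    volume S ≠ ⊤ := by
  intro h
  simpa [unif_apply MeasurableSet.univ, h] using measure_univ (μ := unif S)

variable [IsProbabilityMeasure (unif S)]

theorem ofReal_le_unif_apply {r : ℝ} (ht : MeasurableSet t) (htS : t ⊆ S)
    (hr : r * (volume S).toReal ≤ (volume t).toReal) : ENNReal.ofReal r ≤ unif S t := by
  have hS := volume_ne_top_of_isProbabilityMeasure_unif (S := S)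
  rw [unif_apply_of_subset ht htS, ENNReal.le_div_iff_mul_le
    (.inl volume_ne_zero_of_isProbabilityMeasure_unif) (.inl hS),
    ← ENNReal.ofReal_toReal hS, ← ENNReal.ofReal_mul' ENNReal.toReal_nonneg,
    ← ENNReal.ofReal_toReal (measure_ne_top_of_subset htS hS)]
  exact ENNReal.ofReal_le_ofReal hr

theorem unif_apply_le_ofReal {r : ℝ} (ht : MeasurableSet t) (htS : t ⊆ S)
    (hr : (volume t).toReal ≤ r * (volume S).toReal) : unif S t ≤ ENNReal.ofReal r := by
  have hS := volume_ne_top_of_isProbabilityMeasure_unif (S := S)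
  rw [unif_apply_of_subset ht htS, ENNReal.div_le_iff_le_mul
    (.inl volume_ne_zero_of_isProbabilityMeasure_unif) (.inl hS),
    ← ENNReal.ofReal_toReal hS, ← ENNReal.ofReal_mul' ENNReal.toReal_nonneg,
    ← ENNReal.ofReal_toReal (measure_ne_top_of_subset htS hS)]
  exact ENNReal.ofReal_le_ofReal hr

theorem ofReal_one_sub_le_unif_compl {r : ℝ} (hr0 : 0 ≤ r) (ht : MeasurableSet t) (htS : t ⊆ S)
    (hr : (volume t).toReal ≤ r * (volume S).toReal) : ENNReal.ofReal (1 - r) ≤ unif S tᶜ := by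
  rw [prob_compl_eq_one_sub ht, ENNReal.ofReal_sub _ hr0, ENNReal.ofReal_one]
  exact tsub_le_tsub_left (unif_apply_le_ofReal ht htS hr) 1

end Unif

theorem prob_two_points_in_first_cell_general
    (K : Set E2)
    (a b : ℝ) (ha : 0 < a) (hb : 0 < b) :
    ∃ c > (0:ℝ), ∃ n₀ : ℕ, ∀ n : ℕ, n₀ ≤ n →
      ∀ D : Set E2, D ⊆ K → MeasurableSet D →
      ∀ B : Fin 3 → Set E2, (∀ k, B k ⊆ D) → (∀ k, MeasurableSet (B k)) →
        (Pairwise fun k l => Disjoint (B k) (B l)) →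
        (∀ k, a * (volume K).toReal / n ≤ (volume (B k)).toReal) →
        (volume D).toReal ≤ b * (volume K).toReal / n →
      ∀ (Ω : Type) (_ : MeasureSpace Ω), IsProbabilityMeasure (ℙ : Measure Ω) →
      ∀ X : Fin n → Ω → E2, (∀ i, Measurable (X i)) →
        iIndepFun X ℙ →
        (∀ i, Measure.map (X i) ℙ = unif K) →
        ENNReal.ofReal c ≤
          ℙ {ω | ({i : Fin n | X i ω ∈ B 0}).ncard = 2 ∧
                 ({i : Fin n | X i ω ∈ B 1}).ncard = 1 ∧
                 ({i : Fin n | X i ω ∈ B 2}).ncard = 1 ∧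
                 ∀ i : Fin n, X i ω ∉ D \ (B 0 ∪ B 1 ∪ B 2)} := by
  refine ⟨(a / 2) ^ 4 * Real.exp (-(2 * b)) / (4 : ℕ).factorial, by positivity,
    max 6 ⌈2 * b⌉₊, ?_⟩
  intro n hn D hDK hD B hBD hB hBdisj hBvol hDvol Ω _ _ X hX hindep hlaw
  have hn6 : 6 ≤ n := le_of_max_le_left hn
  have hbn : 2 * b ≤ n := Nat.ceil_le.mp (le_of_max_le_right hn)
  have : IsProbabilityMeasure (unif K) :=
    hlaw ⟨0, by omega⟩ ▸ Measure.isProbabilityMeasure_map (hX _).aemeasurable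
  set ℓ : Fin 4 → Fin 3 := ![0, 0, 1, 2]
  have hBlow (l : Fin 3) : ENNReal.ofReal (a / n) ≤ unif K (B l) :=
    ofReal_le_unif_apply (hB l) ((hBD l).trans hDK) (by rw [div_mul_eq_mul_div]; exact hBvol l)
  have hDc : ENNReal.ofReal (1 - b / n) ≤ unif K Dᶜ :=
    ofReal_one_sub_le_unif_compl (by positivity) hD hDK (by rw [div_mul_eq_mul_div]; exact hDvol)
  calc ENNReal.ofReal ((a / 2) ^ 4 * Real.exp (-(2 * b)) / (4 : ℕ).factorial)
      ≤ ENNReal.ofReal (n.choose 4 * ((a / n) ^ 4 * (1 - b / n) ^ (n - 4))) :=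
        ENNReal.ofReal_le_ofReal
          (choose_mul_pow_mul_one_sub_pow_ge ha.le hb.le (by omega) (by omega) hbn)
    _ = n.choose 4 * (ENNReal.ofReal (a / n) ^ 4 * ENNReal.ofReal (1 - b / n) ^ (n - 4)) := by
        have hbn' : b / n ≤ 1 := by rw [div_le_one (by positivity)]; linarith
        rw [ENNReal.ofReal_mul (by positivity), ENNReal.ofReal_natCast,
          ENNReal.ofReal_mul (by positivity), ENNReal.ofReal_pow (by positivity),
          ENNReal.ofReal_pow (by linarith)]
    _ ≤ n.choose 4 * ((∏ j, unif K (B (ℓ j))) * unif K Dᶜ ^ (n - 4)) := by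
        gcongr
        simpa using Finset.pow_card_le_prod Finset.univ _ _ fun j _ ↦ hBlow (ℓ j)
    _ = ℙ (⋃ g : Fin 4 ↪o Fin n, placementEvent X D (B ∘ ℓ) g.toEmbedding) :=
        (measure_iUnion_placementEvent hX hindep hlaw hD (fun _ ↦ hB _) fun _ ↦ hBD _).symm
    _ ≤ _ := by
        refine measure_mono (Set.iUnion_subset fun g ω hω ↦ ?_)
        have hcard := ncard_setOf_mem_of_mem_placementEvent hBdisj hBD hω
        refine ⟨hcard 0, hcard 1, hcard 2, fun i ⟨hiD, hiB⟩ ↦ ?_⟩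
        obtain ⟨l, hl⟩ := exists_mem_of_mem_placementEvent hω hiD
        fin_cases l <;> simp_all

theorem prob_two_points_in_first_cell
    (K : Set E2) (hK : IsCompact K) (hKconv : Convex ℝ K)
    (hKint : (interior K).Nonempty)
    (a b : ℝ) (ha : 0 < a) (hb : 0 < b) :
    ∃ c > (0:ℝ), ∃ n₀ : ℕ, ∀ n : ℕ, n₀ ≤ n →
      ∀ D : Set E2, D ⊆ K → MeasurableSet D →
      ∀ B : Fin 3 → Set E2, (∀ k, B k ⊆ D) → (∀ k, MeasurableSet (B k)) →
        (Pairwise fun k l => Disjoint (B k) (B l)) →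
        (∀ k, a * (volume K).toReal / n ≤ (volume (B k)).toReal) →
        (volume D).toReal ≤ b * (volume K).toReal / n →
      ∀ (Ω : Type) (_ : MeasureSpace Ω), IsProbabilityMeasure (ℙ : Measure Ω) →
      ∀ X : Fin n → Ω → E2, (∀ i, Measurable (X i)) →
        iIndepFun X ℙ →
        (∀ i, Measure.map (X i) ℙ = unif K) →
        ENNReal.ofReal c ≤
          ℙ {ω | ({i : Fin n | X i ω ∈ B 0}).ncard = 2 ∧
                 ({i : Fin n | X i ω ∈ B 1}).ncard = 1 ∧
                 ({i : Fin n | X i ω ∈ B 2}).ncard = 1 ∧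
                 ∀ i : Fin n, X i ω ∉ D \ (B 0 ∪ B 1 ∪ B 2)} :=
  prob_two_points_in_first_cell_general K a b ha hb
end
end

section
/- There exist constants c₃ > 0 and t₀ > 0, depending only on K, such that for every x ∈ ∂K, every 0 < t ≤ t₀, every a₀ ∈ Δ₀(x,t) and a₁ ∈ Δ₁(x,t) ∪ Δ₂(x,t), and every circle C of radius 1 passing through a₀ and a₁, the shorter of the two arcs of C between a₀ and a₁ is contained in the half-plane {y ∈ ℝ² : ⟨y − x, u_x⟩ ≥ −c₃·t}; i.e., the unit-radius arc joining two points of these triangles meets the boundary of K at depth at most c₃·t below the tangent line of K at x. -/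
open MeasureTheory ProbabilityTheory
open scoped RealInnerProductSpace

noncomputable section

/-- The `r`-spindle convex hull of a set `X`: the intersection of all closed discs of
radius `r` containing `X`. -/
def spindleHull (r : ℝ) (X : Set E2) : Set E2 :=
  ⋂ v ∈ {v : E2 | X ⊆ Metric.closedBall v r}, Metric.closedBall v r

/-- `K` slides freely inside a disc of radius `ρ`. -/
def SlidesFreelyInDisc (K : Set E2) (ρ : ℝ) : Prop :=
  ∀ x ∈ frontier K, ∃ v : E2, dist x v = ρ ∧ K ⊆ Metric.closedBall v ρ

/-- A disc of radius `ρ` slides freely inside `K`. -/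
def DiscSlidesFreelyIn (K : Set E2) (ρ : ℝ) : Prop :=
  ∀ x ∈ frontier K, ∃ v : E2, dist x v = ρ ∧ Metric.closedBall v ρ ⊆ K

/-- `u` is an outer unit normal vector of `K` at the boundary point `x`. -/
def IsOuterNormal (K : Set E2) (x u : E2) : Prop :=
  ‖u‖ = 1 ∧ ∀ y ∈ K, (inner ℝ (y - x) u : ℝ) ≤ 0

/-- The triangle with vertices `x`, `w₁`, `w₂`. -/
def capTriangle (x w₁ w₂ : E2) : Set E2 := convexHull ℝ {x, w₁, w₂}

/-- The image of `S` under the homothety of centre `c` and ratio `1/20`. -/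
def shrink (c : E2) (S : Set E2) : Set E2 := (fun p => c + (20:ℝ)⁻¹ • (p - c)) '' S

/-- The image of `S` under the homothety of centre `c` and ratio `1/3`. -/
def shrinkThird (c : E2) (S : Set E2) : Set E2 := (fun p => c + (3:ℝ)⁻¹ • (p - c)) '' S

/-- `Â(z₀)`: the area gained by adding the point `z₀` to `{z₁, z₂}` in the spindle hull
of radius `1`. -/
def Ahat (z₀ z₁ z₂ : E2) : ℝ :=
  (volume (spindleHull 1 {z₀, z₁, z₂})).toReal
    - (volume (spindleHull 1 ({z₁, z₂} : Set E2))).toReal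

/-- The disc-cap of `K` with vertex `y` (outer unit normal `u`) and height `t`. -/
def discCap (K : Set E2) (y u : E2) (t : ℝ) : Set E2 :=
  K \ Metric.ball (y - (1 + t) • u) 1

/-- The shorter (minor) arc of the unit circle centred at `v` between the points
`a₀` and `a₁` of that circle: the points of the circle lying on the far side of
the chord `[a₀, a₁]` from the centre `v`. -/
def minorArc (v a₀ a₁ : E2) : Set E2 :=
  {p : E2 | dist p v = 1 ∧
    ‖midpoint ℝ a₀ a₁ - v‖ ^ 2 ≤ (inner ℝ (p - v) (midpoint ℝ a₀ a₁ - v) : ℝ)}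

/-!
The disc of radius `ρ₀` sliding inside `K` makes the outer normal at `x` unique, so the disc of
radius `ρ₁ < 1` containing `K` and touching `x` is centred at `x - ρ₁ • u`; hence every point of
`K` at depth at most `t` below the tangent line at `x` lies within `√(2t)` of `x`. By convexity
the triangle, and with it the shrunken triangles, lie in this cap, so the chord `[a₀, a₁]` has
length `ℓ ≤ √(8t)`. Relative to the chord's midpoint, a point of the minor arc of a unit circle
moves at most the sagitta `≤ ℓ² / 4` normal to the chord and at most `ℓ / 2` along it, so in the
plane the arc dips at most `ℓ² / 4 ≤ 2t` below the lower endpoint, itself at depth at most `t`.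
-/

lemma dist_sq_le_of_norm_sub_sq_le {E : Type*} [SeminormedAddCommGroup E] {a b x : E} {δ : ℝ}
    (ha : ‖a - x‖ ^ 2 ≤ δ) (hb : ‖b - x‖ ^ 2 ≤ δ) : dist a b ^ 2 ≤ 4 * δ := by
  have := dist_triangle_right a b x
  rw [dist_eq_norm a x, dist_eq_norm b x] at this
  nlinarith [pow_le_pow_left₀ dist_nonneg this 2, sq_nonneg (‖a - x‖ - ‖b - x‖)]

section InnerProductSpace

variable {F : Type*} [NormedAddCommGroup F] [InnerProductSpace ℝ F]

lemma norm_sub_sq_add_two_inner_le_zero {c x y : F} {r : ℝ} (hx : dist x c = r)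
    (hy : y ∈ Metric.closedBall c r) : ‖y - x‖ ^ 2 + 2 * ⟪y - x, x - c⟫ ≤ 0 := by
  rw [Metric.mem_closedBall, dist_eq_norm] at hy
  rw [dist_eq_norm] at hx
  have hsq : ‖(y - x) + (x - c)‖ ^ 2 ≤ ‖x - c‖ ^ 2 := by
    rw [sub_add_sub_cancel, hx]
    exact pow_le_pow_left₀ (norm_nonneg _) hy 2
  rw [norm_add_sq_real] at hsq
  linarith

lemma norm_sub_sq_le_of_mem_closedBall_sub_smul {x u y : F} {r t : ℝ} (hu : ‖u‖ = 1)
    (hr : 0 ≤ r) (hy : y ∈ Metric.closedBall (x - r • u) r) (ht : -t ≤ ⟪y - x, u⟫) :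
    ‖y - x‖ ^ 2 ≤ 2 * r * t := by
  have hx : dist x (x - r • u) = r := by
    rw [dist_eq_norm, sub_sub_cancel, norm_smul, hu, mul_one, Real.norm_of_nonneg hr]
  have := norm_sub_sq_add_two_inner_le_zero hx hy
  rw [sub_sub_cancel, real_inner_smul_right] at this
  nlinarith [mul_le_mul_of_nonneg_left ht hr]

/-- In a plane `z` and `s` lie on the line orthogonal to `e`, so `z = c • s` with `|c| ≤ 1`. -/
lemma abs_inner_le_abs_inner_of_inner_eq_zero (hF : Module.finrank ℝ F = 2) {e z s : F}
    (he : e ≠ 0) (hz : ⟪z, e⟫ = 0) (hs : ⟪s, e⟫ = 0) (hzs : ‖z‖ ≤ ‖s‖) (u : F) :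
    |⟪z, u⟫| ≤ |⟪s, u⟫| := by
  rcases eq_or_ne s 0 with rfl | hs0
  · rw [norm_le_zero_iff.mp (hzs.trans_eq norm_zero), inner_zero_left]
  have : Fact (Module.finrank ℝ F = 1 + 1) := ⟨hF⟩
  have hmem : ∀ y : F, ⟪y, e⟫ = 0 → y ∈ (ℝ ∙ e)ᗮ := fun y hy =>
    Submodule.mem_orthogonal_singleton_iff_inner_right.mpr (by rwa [real_inner_comm])
  have hs0' : (⟨s, hmem s hs⟩ : (ℝ ∙ e)ᗮ) ≠ 0 := by simpa [Subtype.ext_iff] using hs0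
  obtain ⟨c, hc⟩ := (finrank_eq_one_iff_of_nonzero' _ hs0').mp
    (Submodule.finrank_orthogonal_span_singleton he) ⟨z, hmem z hz⟩
  have hzc : z = c • s := by simpa [Subtype.ext_iff, eq_comm] using hc
  have hc1 : |c| ≤ 1 := by
    rw [hzc, norm_smul, Real.norm_eq_abs] at hzs
    exact (mul_le_iff_le_one_left (norm_pos_iff.mpr hs0)).mp hzs
  rw [hzc, real_inner_smul_left, abs_mul]
  exact mul_le_of_le_one_left (abs_nonneg _) hc1

lemma abs_inner_le_abs_inner_add_abs_inner (hF : Module.finrank ℝ F = 2) {e d s : F}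
    (he : ‖e‖ = 1) (hs : ⟪s, e⟫ = 0) (hd : ‖d‖ ≤ ‖s‖) {u : F} (hu : ‖u‖ ≤ 1) :
    |⟪d, u⟫| ≤ |⟪d, e⟫| + |⟪s, u⟫| := by
  set z := d - ⟪d, e⟫ • e with hz_def
  have hz : ⟪z, e⟫ = 0 := by
    rw [hz_def, inner_sub_left, real_inner_smul_left, real_inner_self_eq_norm_sq, he]; ring
  have hzd : ‖z‖ ≤ ‖d‖ := by
    have := norm_sub_sq_real d (⟪d, e⟫ • e)
    rw [real_inner_smul_right, norm_smul, he, Real.norm_eq_abs, mul_one, sq_abs] at this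
    exact (pow_le_pow_iff_left₀ (norm_nonneg z) (norm_nonneg d) two_ne_zero).mp (by nlinarith)
  have hzu := abs_inner_le_abs_inner_of_inner_eq_zero hF (norm_ne_zero_iff.mp (he ▸ one_ne_zero))
    hz hs (hzd.trans hd) u
  have heu : |⟪e, u⟫| ≤ 1 := (abs_real_inner_le_norm e u).trans (by rw [he, one_mul]; exact hu)
  calc |⟪d, u⟫| = |⟪d, e⟫ * ⟪e, u⟫ + ⟪z, u⟫| := by
        rw [hz_def, inner_sub_left, real_inner_smul_left]; ring_nf
    _ ≤ |⟪d, e⟫| * |⟪e, u⟫| + |⟪z, u⟫| := by rw [← abs_mul]; exact abs_add_le _ _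
    _ ≤ |⟪d, e⟫| + |⟪s, u⟫| := by gcongr; exact mul_le_of_le_one_right (abs_nonneg _) heu

lemma inner_sub_midpoint_sub_eq_zero {a₀ a₁ v : F} (h : dist a₀ v = dist a₁ v) :
    ⟪a₀ - a₁, midpoint ℝ a₀ a₁ - v⟫ = 0 := by
  rw [dist_eq_norm, dist_eq_norm] at h
  have hmid : midpoint ℝ a₀ a₁ - v = (2:ℝ)⁻¹ • ((a₀ - v) + (a₁ - v)) := by
    rw [midpoint_eq_smul_add, invOf_eq_inv]; module
  rw [hmid, show a₀ - a₁ = (a₀ - v) - (a₁ - v) by abel, real_inner_smul_right, inner_sub_left,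
    inner_add_right, inner_add_right, real_inner_self_eq_norm_sq, real_inner_self_eq_norm_sq, h,
    real_inner_comm (a₀ - v)]
  ring

lemma norm_midpoint_sub_sq_add_dist_sq {a₀ a₁ v : F} (h₀ : dist a₀ v = 1) (h₁ : dist a₁ v = 1) :
    ‖midpoint ℝ a₀ a₁ - v‖ ^ 2 + dist a₀ a₁ ^ 2 / 4 = 1 := by
  have hsplit : a₀ - v = (2:ℝ)⁻¹ • (a₀ - a₁) + (midpoint ℝ a₀ a₁ - v) := by
    rw [midpoint_eq_smul_add, invOf_eq_inv]; module
  have := norm_add_sq_real ((2:ℝ)⁻¹ • (a₀ - a₁)) (midpoint ℝ a₀ a₁ - v)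
  rw [← hsplit, ← dist_eq_norm, h₀, real_inner_smul_left,
    inner_sub_midpoint_sub_eq_zero (h₀.trans h₁.symm), norm_smul, ← dist_eq_norm] at this
  norm_num at this
  nlinarith

lemma norm_sub_midpoint_le {a₀ a₁ v p : F} (h₀ : dist a₀ v = 1) (h₁ : dist a₁ v = 1)
    (hp : dist p v = 1) (hcap : ‖midpoint ℝ a₀ a₁ - v‖ ^ 2 ≤ ⟪p - v, midpoint ℝ a₀ a₁ - v⟫) :
    ‖p - midpoint ℝ a₀ a₁‖ ≤ dist a₀ a₁ / 2 := by
  have := norm_sub_sq_real (p - v) (midpoint ℝ a₀ a₁ - v)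
  rw [sub_sub_sub_cancel_right, ← dist_eq_norm p v, hp] at this
  refine (pow_le_pow_iff_left₀ (norm_nonneg _) (by positivity) two_ne_zero).mp ?_
  linarith [norm_midpoint_sub_sq_add_dist_sq h₀ h₁]

/-- The upper bound is `‖m - v‖` times the sagitta `1 - ‖m - v‖ ≤ 1 - ‖m - v‖ ^ 2`. -/
lemma inner_sub_midpoint_mem_Icc {a₀ a₁ v p : F} (h₀ : dist a₀ v = 1) (h₁ : dist a₁ v = 1)
    (hp : dist p v = 1) (hcap : ‖midpoint ℝ a₀ a₁ - v‖ ^ 2 ≤ ⟪p - v, midpoint ℝ a₀ a₁ - v⟫) :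
    ⟪p - midpoint ℝ a₀ a₁, midpoint ℝ a₀ a₁ - v⟫ ∈
      Set.Icc 0 (‖midpoint ℝ a₀ a₁ - v‖ * (dist a₀ a₁ ^ 2 / 4)) := by
  have hpyth := norm_midpoint_sub_sq_add_dist_sq h₀ h₁
  have hcs : ⟪p - v, midpoint ℝ a₀ a₁ - v⟫ ≤ ‖midpoint ℝ a₀ a₁ - v‖ := by
    simpa [← dist_eq_norm p v, hp] using real_inner_le_norm (p - v) (midpoint ℝ a₀ a₁ - v)
  rw [show p - midpoint ℝ a₀ a₁ = (p - v) - (midpoint ℝ a₀ a₁ - v) by abel, inner_sub_left,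
    real_inner_self_eq_norm_sq]
  have hh1 : ‖midpoint ℝ a₀ a₁ - v‖ ≤ 1 := by
    nlinarith [sq_nonneg (dist a₀ a₁), norm_nonneg (midpoint ℝ a₀ a₁ - v)]
  constructor
  · linarith
  · nlinarith [norm_nonneg (midpoint ℝ a₀ a₁ - v)]

end InnerProductSpace

lemma center_eq_of_closedBall_subset {K : Set E2} {x n c : E2} {r : ℝ} (hn : IsOuterNormal K x n)
    (hx : dist x c = r) (hsub : Metric.closedBall c r ⊆ K) : c = x - r • n := by
  have hr : 0 ≤ r := hx ▸ dist_nonneg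
  have hmem : c + r • n ∈ K := hsub <| by
    simp [Metric.mem_closedBall, dist_eq_norm, norm_smul, abs_of_nonneg hr, hn.1]
  have hinner : ⟪c - x, n⟫ + r ≤ 0 := by
    have := hn.2 _ hmem
    rwa [show c + r • n - x = (c - x) + r • n by abel, inner_add_left, real_inner_smul_left,
      real_inner_self_eq_norm_sq, hn.1, one_pow, mul_one] at this
  have hcx : ‖c - x‖ = r := by rw [← dist_eq_norm, dist_comm, hx]
  have hzero : ‖(c - x) + r • n‖ ^ 2 ≤ 0 := by
    rw [norm_add_sq_real, real_inner_smul_right, norm_smul, Real.norm_eq_abs, abs_of_nonneg hr,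
      hn.1, hcx]
    nlinarith
  have := norm_eq_zero.mp (pow_eq_zero_iff two_ne_zero |>.mp (le_antisymm hzero (by positivity)))
  rw [← sub_eq_zero, ← this]
  abel

lemma isOuterNormal_of_subset_closedBall {K : Set E2} {x c : E2} {r : ℝ} (hr : 0 < r)
    (hx : dist x c = r) (hsub : K ⊆ Metric.closedBall c r) :
    IsOuterNormal K x (r⁻¹ • (x - c)) := by
  refine ⟨by rw [norm_smul, ← dist_eq_norm, hx, norm_inv, Real.norm_of_nonneg hr.le,
    inv_mul_cancel₀ hr.ne'], fun y hy => ?_⟩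
  have := norm_sub_sq_add_two_inner_le_zero hx (hsub hy)
  rw [real_inner_smul_right]
  exact mul_nonpos_of_nonneg_of_nonpos (inv_nonneg.mpr hr.le) (by nlinarith [sq_nonneg ‖y - x‖])

/-- The inner disc forces `u` to be the unique outer normal at `x`, and the outer disc provides
the outer normal `ρ₁⁻¹ • (x - vout)`. -/
lemma subset_closedBall_sub_smul {K : Set E2} {x u vin vout : E2} {ρ₀ ρ₁ : ℝ} (hρ₀ : 0 < ρ₀)
    (hρ₀₁ : ρ₀ ≤ ρ₁) (hu : IsOuterNormal K x u) (hvin : dist x vin = ρ₀)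
    (hin : Metric.closedBall vin ρ₀ ⊆ K) (hvout : dist x vout = ρ₁)
    (hout : K ⊆ Metric.closedBall vout ρ₁) : K ⊆ Metric.closedBall (x - ρ₁ • u) ρ₁ := by
  have hρ₁ : 0 < ρ₁ := hρ₀.trans_le hρ₀₁
  have hn := isOuterNormal_of_subset_closedBall hρ₁ hvout hout
  have hun : u = ρ₁⁻¹ • (x - vout) := by
    have h := (center_eq_of_closedBall_subset hu hvin hin).symm.trans
      (center_eq_of_closedBall_subset hn hvin hin)
    exact smul_right_injective E2 hρ₀.ne' (sub_right_injective h)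
  rwa [hun, smul_smul, mul_inv_cancel₀ hρ₁.ne', one_smul, sub_sub_cancel]

lemma shrink_subset {c : E2} {S : Set E2} (hS : Convex ℝ S) (hc : c ∈ S) : shrink c S ⊆ S := by
  rintro _ ⟨q, hq, rfl⟩
  have h := hS hc hq (by norm_num : (0:ℝ) ≤ 19 / 20) (by norm_num : (0:ℝ) ≤ 1 / 20)
    (by norm_num)
  convert h using 1
  module

lemma capTriangle_subset {K : Set E2} (hK : Convex ℝ K) {x u w₁ w₂ : E2} {t : ℝ}
    (hx : x ∈ frontier K) (ht : 0 ≤ t) (hw₁ : w₁ ∈ frontier K) (hw₁t : ⟪w₁ - x, u⟫ = -t)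
    (hw₂ : w₂ ∈ frontier K) (hw₂t : ⟪w₂ - x, u⟫ = -t) :
    capTriangle x w₁ w₂ ⊆ closure K ∩ {y | -t ≤ ⟪y - x, u⟫} := by
  refine convexHull_min ?_ (hK.closure.inter ?_)
  · rintro y (rfl | rfl | rfl)
    · exact ⟨frontier_subset_closure hx, by simpa⟩
    · exact ⟨frontier_subset_closure hw₁, hw₁t.ge⟩
    · exact ⟨frontier_subset_closure hw₂, hw₂t.ge⟩
  · simpa only [innerₗ_apply_apply, real_inner_comm u, inner_sub_right, le_sub_iff_add_le] using
      convex_halfSpace_ge (innerₗ E2 u).isLinear (-t + ⟪u, x⟫)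

lemma inner_midpoint_sub_le_of_mem_minorArc {v a₀ a₁ p : E2} (h₀ : dist a₀ v = 1)
    (h₁ : dist a₁ v = 1) (hchord : dist a₀ a₁ < 2) (hp : p ∈ minorArc v a₀ a₁) {u : E2}
    (hu : ‖u‖ ≤ 1) :
    ⟪midpoint ℝ a₀ a₁ - p, u⟫ ≤ dist a₀ a₁ ^ 2 / 4 + |⟪a₀ - a₁, u⟫| / 2 := by
  obtain ⟨hpv, hcap⟩ := hp
  have hpyth := norm_midpoint_sub_sq_add_dist_sq h₀ h₁
  set m := midpoint ℝ a₀ a₁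
  have hh : 0 < ‖m - v‖ := by
    have : dist a₀ a₁ ^ 2 < 4 := by nlinarith [dist_nonneg (x := a₀) (y := a₁)]
    nlinarith [norm_nonneg (m - v)]
  set e := ‖m - v‖⁻¹ • (m - v)
  have he : ‖e‖ = 1 := by
    rw [norm_smul, norm_inv, norm_norm, inv_mul_cancel₀ hh.ne']
  obtain ⟨hα0, hα1⟩ := inner_sub_midpoint_mem_Icc h₀ h₁ hpv hcap
  have hα : |⟪p - m, e⟫| ≤ dist a₀ a₁ ^ 2 / 4 := by
    rw [real_inner_smul_right, abs_of_nonneg (mul_nonneg (inv_nonneg.mpr hh.le) hα0),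
      inv_mul_le_iff₀ hh]
    exact hα1
  have hse : ⟪(2:ℝ)⁻¹ • (a₀ - a₁), e⟫ = 0 := by
    rw [real_inner_smul_left, real_inner_smul_right, inner_sub_midpoint_sub_eq_zero
      (h₀.trans h₁.symm)]
    ring
  have hps : ‖p - m‖ ≤ ‖(2:ℝ)⁻¹ • (a₀ - a₁)‖ := by
    rw [norm_smul, ← dist_eq_norm, norm_inv, Real.norm_two, inv_mul_eq_div]
    exact norm_sub_midpoint_le h₀ h₁ hpv hcap
  have key := abs_inner_le_abs_inner_add_abs_inner finrank_euclideanSpace_fin he hse hps hu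
  rw [real_inner_smul_left, abs_mul, abs_of_pos (by norm_num : (0:ℝ) < 2⁻¹)] at key
  rw [← neg_sub, inner_neg_left]
  linarith [neg_abs_le ⟪p - m, u⟫]

lemma min_inner_sub_le_inner_sub_of_mem_minorArc {v a₀ a₁ p : E2} (h₀ : dist a₀ v = 1)
    (h₁ : dist a₁ v = 1) (hchord : dist a₀ a₁ < 2) (hp : p ∈ minorArc v a₀ a₁) {u : E2}
    (hu : ‖u‖ ≤ 1) (x : E2) :
    min ⟪a₀ - x, u⟫ ⟪a₁ - x, u⟫ - dist a₀ a₁ ^ 2 / 4 ≤ ⟪p - x, u⟫ := by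
  have harc := inner_midpoint_sub_le_of_mem_minorArc h₀ h₁ hchord hp hu
  set A := ⟪a₀ - x, u⟫
  set B := ⟪a₁ - x, u⟫
  have hdiff : ⟪a₀ - a₁, u⟫ = A - B := by
    rw [show a₀ - a₁ = (a₀ - x) - (a₁ - x) by abel, inner_sub_left]
  have hpx : ⟪p - x, u⟫ = (A + B) / 2 - ⟪midpoint ℝ a₀ a₁ - p, u⟫ := by
    rw [show p - x = (2:ℝ)⁻¹ • ((a₀ - x) + (a₁ - x)) - (midpoint ℝ a₀ a₁ - p) by
      rw [midpoint_eq_smul_add, invOf_eq_inv]; module, inner_sub_left, real_inner_smul_left,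
      inner_add_left]
    ring
  have habs : |A - B| ≤ A + B - 2 * min A B :=
    abs_le.mpr ⟨by linarith [min_le_left A B], by linarith [min_le_right A B]⟩
  rw [hpx]
  rw [hdiff] at harc
  linarith

theorem arc_depth_bound_general
    (K : Set E2) (hKconv : Convex ℝ K)
    (ρ₀ ρ₁ : ℝ) (hρ₀ : 0 < ρ₀) (hρ₀₁ : ρ₀ ≤ ρ₁) (hρ₁ : ρ₁ < 1)
    (hin : DiscSlidesFreelyIn K ρ₀) (hout : SlidesFreelyInDisc K ρ₁) :
    ∃ c₃ > (0:ℝ), ∃ t₀ > (0:ℝ), ∀ x ∈ frontier K, ∀ u : E2, IsOuterNormal K x u →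
      ∀ t : ℝ, 0 < t → t ≤ t₀ →
      ∀ w₁ w₂ : E2, w₁ ≠ w₂ →
        w₁ ∈ frontier K → (inner ℝ (w₁ - x) u : ℝ) = -t →
        w₂ ∈ frontier K → (inner ℝ (w₂ - x) u : ℝ) = -t →
      ∀ a₀ ∈ shrink x (capTriangle x w₁ w₂),
      ∀ a₁ ∈ shrink w₁ (capTriangle x w₁ w₂) ∪ shrink w₂ (capTriangle x w₁ w₂),
      ∀ v : E2, dist a₀ v = 1 → dist a₁ v = 1 →
        minorArc v a₀ a₁ ⊆ {p : E2 | -(c₃ * t) ≤ (inner ℝ (p - x) u : ℝ)} := by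
  refine ⟨3, by norm_num, 1 / 4, by norm_num, ?_⟩
  intro x hx u hu t ht ht₀ w₁ w₂ _ hw₁ hw₁t hw₂ hw₂t a₀ ha₀ a₁ ha₁ v ha₀v ha₁v p hp
  obtain ⟨vin, hvin, hinK⟩ := hin x hx
  obtain ⟨vout, hvout, hKout⟩ := hout x hx
  have hball : closure K ⊆ Metric.closedBall (x - ρ₁ • u) ρ₁ :=
    closure_minimal (subset_closedBall_sub_smul hρ₀ hρ₀₁ hu hvin hinK hvout hKout)
      Metric.isClosed_closedBall
  have hcap {c : E2} (hc : c ∈ ({x, w₁, w₂} : Set E2)) :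
      shrink c (capTriangle x w₁ w₂) ⊆ closure K ∩ {y | -t ≤ ⟪y - x, u⟫} :=
    (shrink_subset (convex_convexHull ℝ _) (subset_convexHull ℝ _ hc)).trans
      (capTriangle_subset hKconv hx ht.le hw₁ hw₁t hw₂ hw₂t)
  obtain ⟨ha₀K, ha₀t⟩ := hcap (by simp) ha₀
  obtain ⟨ha₁K, ha₁t⟩ := ha₁.elim (hcap (by simp) ·) (hcap (by simp) ·)
  have hρ₁₀ : 0 ≤ ρ₁ := hρ₀.le.trans hρ₀₁
  have hchord := dist_sq_le_of_norm_sub_sq_le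
    (norm_sub_sq_le_of_mem_closedBall_sub_smul hu.1 hρ₁₀ (hball ha₀K) ha₀t)
    (norm_sub_sq_le_of_mem_closedBall_sub_smul hu.1 hρ₁₀ (hball ha₁K) ha₁t)
  have harc := min_inner_sub_le_inner_sub_of_mem_minorArc ha₀v ha₁v
    (by nlinarith [dist_nonneg (x := a₀) (y := a₁)]) hp hu.1.le x
  show -(3 * t) ≤ ⟪p - x, u⟫
  nlinarith [le_min (α := ℝ) ha₀t ha₁t]

theorem arc_depth_bound
    (K : Set E2) (hK : IsCompact K) (hKconv : Convex ℝ K)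
    (hKint : (interior K).Nonempty)
    (ρ₀ ρ₁ : ℝ) (hρ₀ : 0 < ρ₀) (hρ₀₁ : ρ₀ ≤ ρ₁) (hρ₁ : ρ₁ < 1)
    (hin : DiscSlidesFreelyIn K ρ₀) (hout : SlidesFreelyInDisc K ρ₁) :
    ∃ c₃ > (0:ℝ), ∃ t₀ > (0:ℝ), ∀ x ∈ frontier K, ∀ u : E2, IsOuterNormal K x u →
      ∀ t : ℝ, 0 < t → t ≤ t₀ →
      ∀ w₁ w₂ : E2, w₁ ≠ w₂ →
        w₁ ∈ frontier K → (inner ℝ (w₁ - x) u : ℝ) = -t →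
        w₂ ∈ frontier K → (inner ℝ (w₂ - x) u : ℝ) = -t →
      ∀ a₀ ∈ shrink x (capTriangle x w₁ w₂),
      ∀ a₁ ∈ shrink w₁ (capTriangle x w₁ w₂) ∪ shrink w₂ (capTriangle x w₁ w₂),
      ∀ v : E2, dist a₀ v = 1 → dist a₁ v = 1 →
        minorArc v a₀ a₁ ⊆ {p : E2 | -(c₃ * t) ≤ (inner ℝ (p - x) u : ℝ)} :=
  arc_depth_bound_general K hKconv ρ₀ ρ₁ hρ₀ hρ₀₁ hρ₁ hin hout
end
end
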